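/- Let M, N be pointwise finite dimensional persistence vector spaces over ℝⁿ, and L a line u = s·m⃗ + b with m* = min_i m_i > 0. Then m*·d_B(B(M_L), B(N_L)) ≤ d_I(M, N), assuming the Algebraic Stability Theorem d_B(B(M'), B(N')) ≤ d_I(M', N') for 1-dimensional pointwise finite dimensional persistence modules M', N'. -/

import Mathlib

open scoped ENNReal

universe u v

/-- An `n`-dimensional persistence vector space over the field `F`:
a family of `F`-vector spaces indexed by `ℝⁿ` (with the componentwise order)
together with functorial transition maps. -/
structure PersMod (n : ℕ) (F : Type u) [Field F] : Type (max (v + 1) u) where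
  space : (Fin n → ℝ) → Type v
  [isAddCommGroup : ∀ p, AddCommGroup (space p)]
  [isModule : ∀ p, Module F (space p)]
  trans : ∀ p q : Fin n → ℝ, p ≤ q → space p →ₗ[F] space q
  trans_self : ∀ (p : Fin n → ℝ) (h : p ≤ p), trans p p h = LinearMap.id
  trans_comp : ∀ (p q r : Fin n → ℝ) (hpq : p ≤ q) (hqr : q ≤ r),
    (trans q r hqr).comp (trans p q hpq) = trans p r (le_trans hpq hqr)

attribute [instance] PersMod.isAddCommGroup PersMod.isModule

/-- A 1-dimensional persistence vector space over `F`, indexed by `ℝ`. -/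
structure PersMod1 (F : Type u) [Field F] : Type (max (v + 1) u) where
  space : ℝ → Type v
  [isAddCommGroup : ∀ s, AddCommGroup (space s)]
  [isModule : ∀ s, Module F (space s)]
  trans : ∀ s t : ℝ, s ≤ t → space s →ₗ[F] space t
  trans_self : ∀ (s : ℝ) (h : s ≤ s), trans s s h = LinearMap.id
  trans_comp : ∀ (s t r : ℝ) (hst : s ≤ t) (htr : t ≤ r),
    (trans t r htr).comp (trans s t hst) = trans s r (le_trans hst htr)

attribute [instance] PersMod1.isAddCommGroup PersMod1.isModule

variable {n : ℕ} {F : Type u} [Field F]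

lemma shift_mono {p q : Fin n → ℝ} (ε : ℝ) (h : p ≤ q) :
    (p + fun _ => ε) ≤ (q + fun _ => ε) := by
  intro i
  simpa using h i

lemma le_shift2 {p : Fin n → ℝ} {ε : ℝ} (hε : 0 ≤ ε) :
    p ≤ (p + fun _ => ε) + fun _ => ε := by
  intro i
  show p i ≤ p i + ε + ε
  linarith

/-- An `ε`-interleaving between two `n`-dimensional persistence vector spaces. -/
structure Interleaving {n : ℕ} {F : Type u} [Field F] (M N : PersMod n F) (ε : ℝ) where
  hε : 0 ≤ ε
  α : ∀ p, M.space p →ₗ[F] N.space (p + fun _ => ε)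
  β : ∀ p, N.space p →ₗ[F] M.space (p + fun _ => ε)
  α_nat : ∀ p q (h : p ≤ q),
    (α q).comp (M.trans p q h) = (N.trans _ _ (shift_mono ε h)).comp (α p)
  β_nat : ∀ p q (h : p ≤ q),
    (β q).comp (N.trans p q h) = (M.trans _ _ (shift_mono ε h)).comp (β p)
  βα : ∀ p, (β (p + fun _ => ε)).comp (α p) =
    M.trans p ((p + fun _ => ε) + fun _ => ε) (le_shift2 hε)
  αβ : ∀ p, (α (p + fun _ => ε)).comp (β p) =
    N.trans p ((p + fun _ => ε) + fun _ => ε) (le_shift2 hε)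

/-- An `ε`-interleaving between two 1-dimensional persistence vector spaces. -/
structure Interleaving1 {F : Type u} [Field F] (M N : PersMod1 F) (ε : ℝ) where
  hε : 0 ≤ ε
  α : ∀ s, M.space s →ₗ[F] N.space (s + ε)
  β : ∀ s, N.space s →ₗ[F] M.space (s + ε)
  α_nat : ∀ s t (h : s ≤ t),
    (α t).comp (M.trans s t h) = (N.trans (s + ε) (t + ε) (by linarith)).comp (α s)
  β_nat : ∀ s t (h : s ≤ t),
    (β t).comp (N.trans s t h) = (M.trans (s + ε) (t + ε) (by linarith)).comp (β s)
  βα : ∀ s, (β (s + ε)).comp (α s) = M.trans s (s + ε + ε) (by linarith)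
  αβ : ∀ s, (α (s + ε)).comp (β s) = N.trans s (s + ε + ε) (by linarith)

/-- The interleaving distance on `n`-dimensional persistence vector spaces. -/
noncomputable def dI (M N : PersMod n F) : ℝ≥0∞ :=
  sInf {x : ℝ≥0∞ | ∃ ε : ℝ, 0 ≤ ε ∧ x = ENNReal.ofReal ε ∧ Nonempty (Interleaving M N ε)}

/-- The interleaving distance on 1-dimensional persistence vector spaces. -/
noncomputable def dI1 (M N : PersMod1.{u, v} F) : ℝ≥0∞ :=
  sInf {x : ℝ≥0∞ | ∃ ε : ℝ, 0 ≤ ε ∧ x = ENNReal.ofReal ε ∧ Nonempty (Interleaving1 M N ε)}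

lemma line_mono (m b : Fin n → ℝ) (hm : ∀ i, 0 ≤ m i) {s t : ℝ} (h : s ≤ t) :
    s • m + b ≤ t • m + b := by
  intro i
  simp only [Pi.add_apply, Pi.smul_apply, smul_eq_mul]
  nlinarith [hm i]

/-- The restriction `M_L` of a persistence vector space `M` to the line
`L : u = s • m + b` (with positive direction vector `m`). -/
noncomputable def PersMod.restrict (M : PersMod n F) (m b : Fin n → ℝ)
    (hm : ∀ i, 0 < m i) : PersMod1.{u, v} F where
  space s := M.space (s • m + b)
  trans s t h := M.trans _ _ (line_mono m b (fun i => (hm i).le) h)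
  trans_self _ _ := M.trans_self _ _
  trans_comp _ _ _ _ _ := M.trans_comp _ _ _ _ _

lemma key_le (m b : Fin n → ℝ) (hm : ∀ i, 0 < m i) (ι : Fin n) (hι : ∀ i, m ι ≤ m i)
    {ε : ℝ} (hε : 0 ≤ ε) (s : ℝ) :
    (s • m + b) + (fun _ => ε) ≤ (s + ε / m ι) • m + b := by
  intro i
  simp only [Pi.add_apply, Pi.smul_apply, smul_eq_mul]
  have h1 : ε / m ι * m ι = ε := div_mul_cancel₀ ε (hm ι).ne'
  have h2 : 0 ≤ ε / m ι := div_nonneg hε (hm ι).le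
  nlinarith [hι i]

lemma key_le' (m b : Fin n → ℝ) (hm : ∀ i, 0 < m i) (ι : Fin n) (hι : ∀ i, m ι ≤ m i)
    {ε : ℝ} (hε : 0 ≤ ε) (s : ℝ) :
    s • m + b ≤ ((s + ε / m ι) • m + b) - fun _ => ε := by
  intro i
  simp only [Pi.sub_apply, Pi.add_apply, Pi.smul_apply, smul_eq_mul]
  have h1 : ε / m ι * m ι = ε := div_mul_cancel₀ ε (hm ι).ne'
  have h2 : 0 ≤ ε / m ι := div_nonneg hε (hm ι).le
  nlinarith [hι i]

lemma shift_cancel (p : Fin n → ℝ) (ε : ℝ) : (p - fun _ => ε) + (fun _ => ε) = p := by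
  funext i
  simp

namespace PersMod

lemma trans_trans (M : PersMod n F) {p q r : Fin n → ℝ} (hpq : p ≤ q) (hqr : q ≤ r)
    (x : M.space p) :
    M.trans q r hqr (M.trans p q hpq x) = M.trans p r (le_trans hpq hqr) x :=
  LinearMap.congr_fun (M.trans_comp p q r hpq hqr) x

variable {M N : PersMod n F} {ε : ℝ} (hε : 0 ≤ ε) (m b : Fin n → ℝ) (hm : ∀ i, 0 < m i)
  (ι : Fin n) (hι : ∀ i, m ι ≤ m i)

/-- An `ε`-shift `f : M → N(ε)` seen on the line `L`: the point `p = s • m + b` is sent to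
`p + ε`, which lies below the point `(s + ε / m ι) • m + b` of `L` since `m ι` is the smallest
coordinate of `m`. -/
noncomputable def restrictShift (f : ∀ p, M.space p →ₗ[F] N.space (p + fun _ => ε))
    (s : ℝ) :
    M.space (s • m + b) →ₗ[F] N.space ((s + ε / m ι) • m + b) :=
  (N.trans _ _ (key_le m b hm ι hι hε s)).comp (f (s • m + b))

lemma restrictShift_comp_trans (f : ∀ p, M.space p →ₗ[F] N.space (p + fun _ => ε))
    (hf : ∀ p q (h : p ≤ q),
      (f q).comp (M.trans p q h) = (N.trans _ _ (shift_mono ε h)).comp (f p))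
    {s t : ℝ} (hst : s ≤ t) :
    (restrictShift hε m b hm ι hι f t).comp ((M.restrict m b hm).trans s t hst) =
      ((N.restrict m b hm).trans (s + ε / m ι) (t + ε / m ι) (by linarith)).comp
        (restrictShift hε m b hm ι hι f s) := by
  ext (x : M.space (s • m + b))
  have hfx := LinearMap.congr_fun (hf _ _ (line_mono m b (fun i => (hm i).le) hst)) x
  simp only [LinearMap.comp_apply] at hfx
  change N.trans _ _ _ (f _ (M.trans _ _ _ x)) = N.trans _ _ _ (N.trans _ _ _ (f _ x))
  rw [hfx, trans_trans, trans_trans]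

lemma restrictShift_comp_restrictShift (f : ∀ p, M.space p →ₗ[F] N.space (p + fun _ => ε))
    (g : ∀ p, N.space p →ₗ[F] M.space (p + fun _ => ε))
    (hg : ∀ p q (h : p ≤ q),
      (g q).comp (N.trans p q h) = (M.trans _ _ (shift_mono ε h)).comp (g p))
    (hgf : ∀ p, (g (p + fun _ => ε)).comp (f p) = M.trans p _ (le_shift2 hε)) (s : ℝ) :
    (restrictShift hε m b hm ι hι g (s + ε / m ι)).comp (restrictShift hε m b hm ι hι f s) =
      (M.restrict m b hm).trans s (s + ε / m ι + ε / m ι) (by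
        have := div_nonneg hε (hm ι).le
        linarith) := by
  ext x
  have hgx := LinearMap.congr_fun (hg _ _ (key_le m b hm ι hι hε s)) (f _ x)
  have hgfx := LinearMap.congr_fun (hgf (s • m + b)) x
  simp only [LinearMap.comp_apply] at hgx hgfx
  change M.trans _ _ _ (g _ (N.trans _ _ _ (f _ x))) = M.trans _ _ _ x
  rw [hgx, hgfx, trans_trans, trans_trans]

end PersMod

noncomputable def Interleaving.restrict {M N : PersMod n F} {ε : ℝ}
    (I : Interleaving M N ε) (m b : Fin n → ℝ) (hm : ∀ i, 0 < m i)
    (ι : Fin n) (hι : ∀ i, m ι ≤ m i) :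
    Interleaving1 (M.restrict m b hm) (N.restrict m b hm) (ε / m ι) where
  hε := div_nonneg I.hε (hm ι).le
  α := PersMod.restrictShift I.hε m b hm ι hι I.α
  β := PersMod.restrictShift I.hε m b hm ι hι I.β
  α_nat _ _ := PersMod.restrictShift_comp_trans I.hε m b hm ι hι I.α I.α_nat
  β_nat _ _ := PersMod.restrictShift_comp_trans I.hε m b hm ι hι I.β I.β_nat
  βα := PersMod.restrictShift_comp_restrictShift I.hε m b hm ι hι I.α I.β I.β_nat I.βα
  αβ := PersMod.restrictShift_comp_restrictShift I.hε m b hm ι hι I.β I.α I.α_nat I.αβ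

lemma dI1_restrict_le {M N : PersMod n F} {ε : ℝ} (I : Interleaving M N ε)
    (m b : Fin n → ℝ) (hm : ∀ i, 0 < m i) (ι : Fin n) (hι : ∀ i, m ι ≤ m i) :
    dI1 (M.restrict m b hm) (N.restrict m b hm) ≤ ENNReal.ofReal (ε / m ι) :=
  sInf_le ⟨ε / m ι, div_nonneg I.hε (hm ι).le, rfl, ⟨I.restrict m b hm ι hι⟩⟩

/-- For pointwise finite dimensional `M`, `N` and a line `L : u = s • m + b` with
`m* = m ι = min_i m i > 0`, one has `m* ⬝ d_B(B(M_L), B(N_L)) ≤ d_I(M, N)`, assuming the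
Algebraic Stability Theorem (hypothesis `stab` on the map `M' ↦ N' ↦ d_B(B(M'), B(N'))`). -/
theorem stmt_19 (M N : PersMod.{u, v} n F)
    (hM : ∀ p, FiniteDimensional F (M.space p))
    (hN : ∀ p, FiniteDimensional F (N.space p))
    (dB : PersMod1.{u, v} F → PersMod1.{u, v} F → ℝ≥0∞)
    (stab : ∀ M' N' : PersMod1.{u, v} F, (∀ s, FiniteDimensional F (M'.space s)) →
      (∀ s, FiniteDimensional F (N'.space s)) → dB M' N' ≤ dI1 M' N')
    (m b : Fin n → ℝ) (hm : ∀ i, 0 < m i) (ι : Fin n) (hι : ∀ i, m ι ≤ m i) :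
    ENNReal.ofReal (m ι) * dB (M.restrict m b hm) (N.restrict m b hm) ≤ dI M N := by
  refine le_sInf ?_
  rintro _ ⟨ε, -, rfl, ⟨I⟩⟩
  calc ENNReal.ofReal (m ι) * dB (M.restrict m b hm) (N.restrict m b hm)
      ≤ ENNReal.ofReal (m ι) * ENNReal.ofReal (ε / m ι) := by
        gcongr
        exact (stab _ _ (fun _ => hM _) (fun _ => hN _)).trans (dI1_restrict_le I m b hm ι hι)
    _ = ENNReal.ofReal ε := by
        rw [← ENNReal.ofReal_mul (hm ι).le, mul_div_cancel₀ ε (hm ι).ne']
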